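/- arXiv:2601.06476 — 2 statements merged into one kernel-verified Lean document; each statement's English description precedes it below -/
import Mathlib

section
/- Let k be a perfect field of characteristic p > 0 and let f ∈ k[X₁,…,Xₙ] be a nonzero polynomial which is homogeneous with respect to the standard grading. Suppose there exists a monomial order on k[X₁,…,Xₙ] such that the leading monomial of f is squarefree. Then the quotient ring k[X₁,…,Xₙ]/(f) is F-split. -/
/-!
Over a perfect field, `S = k[X₁,…,Xₙ]` is free over `S ^ p` on the monomials `X ^ e` with all
`eᵢ < p`, and taking the `p`-th root of the `X ^ e`-component is a `p⁻¹`-linear map `π_e`.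
Choose `e = (p - 1) • m`, admissible because `m` is squarefree. Then `X ^ e` is the leading
monomial of `f ^ (p - 1)`, so its coefficient is nonzero, and since `f ^ (p - 1)` is homogeneous
of the same degree as `X ^ e`, `π_e (f ^ (p - 1))` is a nonzero constant. After rescaling,
`g ↦ π_e (f ^ (p - 1) * g)` splits Frobenius on `S`, and it maps `(f)` into `(f)` because
`f ^ (p - 1) * f = f ^ p`; so it descends to `S ⧸ (f)`.
-/

open MvPolynomial

/-- `lt` is (the strict relation of) a monomial order on exponent vectors: a strict total
order for which `0` (i.e. the monomial `1`) is the least element and which is compatible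
with addition of exponent vectors (i.e. with multiplication of monomials). -/
def IsMonomialOrder {σ : Type*} (lt : (σ →₀ ℕ) → (σ →₀ ℕ) → Prop) : Prop :=
  IsStrictTotalOrder (σ →₀ ℕ) lt ∧
    (∀ u : σ →₀ ℕ, u ≠ 0 → lt 0 u) ∧
    (∀ u v w : σ →₀ ℕ, lt u v → lt (u + w) (v + w))

/-- `d` is the leading monomial of `f` with respect to the strict order `lt` on
exponent vectors: `d` occurs in `f` and dominates every other exponent in the support. -/
def IsLeadingMonomial {σ : Type*} {R : Type*} [CommSemiring R]
    (lt : (σ →₀ ℕ) → (σ →₀ ℕ) → Prop) (f : MvPolynomial σ R) (d : σ →₀ ℕ) : Prop :=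
  d ∈ f.support ∧ ∀ e ∈ f.support, e ≠ d → lt e d

/-- A commutative ring `R` (of characteristic `p`) is `F`-split if there is an additive
map `φ : R → R` with `φ (r ^ p * s) = r * φ s` and `φ 1 = 1`, i.e. the Frobenius splits. -/
def IsFSplit (p : ℕ) (R : Type*) [CommRing R] : Prop :=
  ∃ φ : R →+ R, (∀ r s : R, φ (r ^ p * s) = r * φ s) ∧ φ 1 = 1

namespace IsLeadingMonomial

variable {σ R : Type*} [CommSemiring R] {lt : (σ →₀ ℕ) → (σ →₀ ℕ) → Prop}
  {f g : MvPolynomial σ R} {m mf mg : σ →₀ ℕ}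

theorem add_lt_add (hlt : IsMonomialOrder lt) (hf : IsLeadingMonomial lt f mf)
    (hg : IsLeadingMonomial lt g mg) {a b : σ →₀ ℕ} (ha : a ∈ f.support) (hb : b ∈ g.support)
    (hne : (a, b) ≠ (mf, mg)) : lt (a + b) (mf + mg) := by
  obtain ⟨hsto, -, hadd⟩ := hlt
  have hadd' : ∀ u v w, lt u v → lt (w + u) (w + v) := by
    intro u v w h
    simpa only [add_comm w] using hadd u v w h
  rcases eq_or_ne a mf with rfl | ha'
  · exact hadd' _ _ _ (hg.2 b hb fun hb' => hne (by rw [hb']))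
  · have h₁ : lt (a + b) (mf + b) := hadd _ _ _ (hf.2 a ha ha')
    rcases eq_or_ne b mg with rfl | hb'
    · exact h₁
    · exact trans_of lt h₁ (hadd' _ _ _ (hg.2 b hb hb'))

theorem coeff_add_mul (hlt : IsMonomialOrder lt) (hf : IsLeadingMonomial lt f mf)
    (hg : IsLeadingMonomial lt g mg) :
    coeff (mf + mg) (f * g) = coeff mf f * coeff mg g := by
  classical
  have := hlt.1
  rw [coeff_mul]
  refine Finset.sum_eq_single (mf, mg) (fun q hq hne => ?_) (fun h => absurd (by simp) h)
  by_contra hq₀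
  have hq₁ : q.1 ∈ f.support := mem_support_iff.2 (left_ne_zero_of_mul hq₀)
  have hq₂ : q.2 ∈ g.support := mem_support_iff.2 (right_ne_zero_of_mul hq₀)
  have := hf.add_lt_add hlt hg hq₁ hq₂ hne
  rw [Finset.HasAntidiagonal.mem_antidiagonal.1 hq] at this
  exact irrefl_of lt _ this

theorem mul [NoZeroDivisors R] (hlt : IsMonomialOrder lt) (hf : IsLeadingMonomial lt f mf)
    (hg : IsLeadingMonomial lt g mg) : IsLeadingMonomial lt (f * g) (mf + mg) := by
  classical
  refine ⟨?_, fun x hx hxne => ?_⟩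
  · rw [mem_support_iff, hf.coeff_add_mul hlt hg]
    exact mul_ne_zero (mem_support_iff.1 hf.1) (mem_support_iff.1 hg.1)
  · obtain ⟨a, ha, b, hb, rfl⟩ := Finset.mem_add.1 (support_mul f g hx)
    exact hf.add_lt_add hlt hg ha hb fun hab => hxne (by simp_all)

theorem pow [NoZeroDivisors R] (hlt : IsMonomialOrder lt) (hf : IsLeadingMonomial lt f m) :
    ∀ j : ℕ, IsLeadingMonomial lt (f ^ j) (j • m)
  | 0 => by
    have : Nontrivial R := nontrivial_of_ne _ 0 (mem_support_iff.1 hf.1)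
    simp [IsLeadingMonomial]
  | j + 1 => by
    rw [pow_succ, succ_nsmul]
    exact (hf.pow hlt j).mul hlt hf

end IsLeadingMonomial

namespace Finsupp

variable {σ : Type*} {p : ℕ} {e a b : σ →₀ ℕ}

theorem nsmul_le_nsmul_add_iff (he : ∀ i, e i < p) : p • b ≤ p • a + e ↔ b ≤ a := by
  simp only [le_def, coe_add, coe_smul, Pi.add_apply, Pi.smul_apply, smul_eq_mul]
  refine forall_congr' fun i => ⟨fun h => ?_, fun h => ?_⟩
  · have : p * b i < p * (a i + 1) := by rw [Nat.mul_succ]; linarith [he i]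
    exact Nat.lt_succ_iff.1 (Nat.lt_of_mul_lt_mul_left this)
  · exact le_add_right (Nat.mul_le_mul_left p h)

theorem injective_nsmul_add (hp : p ≠ 0) (e : σ →₀ ℕ) :
    Function.Injective fun a : σ →₀ ℕ => p • a + e :=
  (add_left_injective e).comp (IsAddTorsionFree.nsmul_right_injective hp)

theorem nsmul_add_tsub_nsmul (h : b ≤ a) : p • a + e - p • b = p • (a - b) + e := by
  rw [← tsub_add_cancel_of_le h, smul_add, add_tsub_cancel_right, add_right_comm,
    add_tsub_cancel_right]

end Finsupp

namespace MvPolynomial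

variable {σ k : Type*} [CommSemiring k] (p : ℕ) [ExpChar k p] [PerfectRing k p]

noncomputable def frobeniusComponent (e : σ →₀ ℕ) : MvPolynomial σ k →+ MvPolynomial σ k :=
  AddMonoidAlgebra.coeffAddEquiv.symm.toAddMonoidHom.comp <|
    (Finsupp.mapRange.addMonoidHom (frobeniusEquiv k p).symm.toAddMonoidHom).comp <|
      (Finsupp.comapDomain.addMonoidHom
        (Finsupp.injective_nsmul_add (expChar_pos k p).ne' e)).comp
          AddMonoidAlgebra.coeffAddEquiv.toAddMonoidHom

variable {p}

theorem coeff_frobeniusComponent (e a : σ →₀ ℕ) (g : MvPolynomial σ k) :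
    coeff a (frobeniusComponent p e g) = (frobeniusEquiv k p).symm (coeff (p • a + e) g) :=
  rfl

theorem frobeniusComponent_pow_mul {e : σ →₀ ℕ} (he : ∀ i, e i < p) (h g : MvPolynomial σ k) :
    frobeniusComponent p e (h ^ p * g) = h * frobeniusComponent p e g := by
  induction h using MvPolynomial.induction_on' with
  | monomial b c =>
    ext a
    rw [monomial_pow, coeff_frobeniusComponent, coeff_monomial_mul', coeff_monomial_mul']
    by_cases hba : b ≤ a
    · rw [if_pos ((Finsupp.nsmul_le_nsmul_add_iff he).2 hba), if_pos hba,
        Finsupp.nsmul_add_tsub_nsmul hba, map_mul, frobeniusEquiv_symm_pow,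
        coeff_frobeniusComponent]
    · rw [if_neg (mt (Finsupp.nsmul_le_nsmul_add_iff he).1 hba), if_neg hba, map_zero]
  | add q r hq hr =>
    rw [add_pow_expChar, add_mul, map_add, hq, hr, add_mul]

theorem frobeniusComponent_eq_C_of_isHomogeneous {e : σ →₀ ℕ} {u : MvPolynomial σ k}
    (hu : u.IsHomogeneous e.degree) :
    frobeniusComponent p e u = C ((frobeniusEquiv k p).symm (coeff e u)) := by
  classical
  ext a
  rw [coeff_frobeniusComponent, coeff_C]
  split_ifs with ha
  · rw [← ha, smul_zero, zero_add]
  · have ha' : a.degree ≠ 0 := mt (Finsupp.degree_eq_zero_iff a).1 (Ne.symm ha)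
    have hdeg : (p • a + e).degree ≠ e.degree := by
      rw [map_add, map_nsmul, smul_eq_mul]
      have := Nat.mul_ne_zero (expChar_pos k p).ne' ha'
      omega
    rw [hu.coeff_eq_zero hdeg, map_zero]

end MvPolynomial

theorem IsFSplit.quotient {p : ℕ} {S : Type*} [CommRing S] {I : Ideal S} (φ : S →+ S)
    (hφ : ∀ r s : S, φ (r ^ p * s) = r * φ s) (hφ₁ : φ 1 = 1) (hI : ∀ g ∈ I, φ g ∈ I) :
    IsFSplit p (S ⧸ I) := by
  refine ⟨QuotientAddGroup.map I.toAddSubgroup I.toAddSubgroup φ hI, ?_, ?_⟩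
  · rintro ⟨r⟩ ⟨s⟩
    exact congrArg (Ideal.Quotient.mk I) (hφ r s)
  · exact congrArg (Ideal.Quotient.mk I) hφ₁

theorem isFSplit_quotient_span_singleton {p : ℕ} (hp : 0 < p) {S : Type*} [CommRing S] {f : S}
    (ψ : S →+ S) (hψ : ∀ r s : S, ψ (r ^ p * s) = r * ψ s) (hψf : ψ (f ^ (p - 1)) = 1) :
    IsFSplit p (S ⧸ Ideal.span {f}) := by
  have hfp : ∀ s, f ^ (p - 1) * (f * s) = f ^ p * s := fun s => by
    rw [← mul_assoc, ← pow_succ, Nat.sub_add_cancel hp]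
  refine IsFSplit.quotient (ψ.comp (AddMonoidHom.mulLeft (f ^ (p - 1)))) (fun r s => ?_)
    (by simpa using hψf) (fun g hg => ?_)
  · simp only [AddMonoidHom.comp_apply, AddMonoidHom.coe_mulLeft, mul_left_comm _ (r ^ p), hψ]
  · obtain ⟨s, rfl⟩ := Ideal.mem_span_singleton'.1 hg
    simp only [AddMonoidHom.comp_apply, AddMonoidHom.coe_mulLeft, mul_comm s f, hfp, hψ]
    exact Ideal.mul_mem_right _ _ (Ideal.mem_span_singleton_self f)

theorem statement11_general (p : ℕ) (hp : p.Prime) (k : Type*) [Field k] [CharP k p]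
    (hperfect : Function.Surjective fun x : k => x ^ p)
    (n : ℕ) (f : MvPolynomial (Fin n) k) (d : ℕ)
    (hfhom : f.IsHomogeneous d)
    (lt : (Fin n →₀ ℕ) → (Fin n →₀ ℕ) → Prop) (hlt : IsMonomialOrder lt)
    (m : Fin n →₀ ℕ) (hm : IsLeadingMonomial lt f m) (hsqfree : ∀ i, m i ≤ 1) :
    IsFSplit p (MvPolynomial (Fin n) k ⧸ Ideal.span {f}) := by
  have : ExpChar k p := ExpChar.prime hp
  have : PerfectRing k p := PerfectRing.ofSurjective k p hperfect
  set e := (p - 1) • m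
  have he : ∀ i, e i < p := fun i => by
    have hmi := Nat.mul_le_mul_left (p - 1) (hsqfree i)
    have hp₀ := hp.pos
    simp only [e, Finsupp.smul_apply, smul_eq_mul] at hmi ⊢
    omega
  have hdeg : m.degree = d := by
    by_contra h
    exact mem_support_iff.1 hm.1 (hfhom.coeff_eq_zero h)
  have hhom : (f ^ (p - 1)).IsHomogeneous e.degree := by
    rw [map_nsmul, hdeg, smul_eq_mul, mul_comm]
    exact hfhom.pow (p - 1)
  set c := (frobeniusEquiv k p).symm (coeff e (f ^ (p - 1)))
  have hc : c ≠ 0 := by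
    simpa [c] using mem_support_iff.1 (hm.pow hlt (p - 1)).1
  refine isFSplit_quotient_span_singleton hp.pos
    ((AddMonoidHom.mulLeft (C c⁻¹)).comp (frobeniusComponent p e)) (fun r s => ?_) ?_
  · simp only [AddMonoidHom.comp_apply, AddMonoidHom.coe_mulLeft, frobeniusComponent_pow_mul he]
    ring
  · rw [AddMonoidHom.comp_apply, frobeniusComponent_eq_C_of_isHomogeneous hhom,
      AddMonoidHom.coe_mulLeft, ← map_mul, inv_mul_cancel₀ hc, map_one]

/-- over a perfect field `k` of characteristic `p > 0`, if a nonzero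
homogeneous polynomial `f ∈ k[X₁,…,Xₙ]` has a squarefree leading monomial with respect to
some monomial order, then `k[X₁,…,Xₙ]/(f)` is `F`-split. -/
theorem statement11 (p : ℕ) (hp : p.Prime) (k : Type*) [Field k] [CharP k p]
    (hperfect : Function.Surjective fun x : k => x ^ p)
    (n : ℕ) (f : MvPolynomial (Fin n) k) (hf0 : f ≠ 0) (d : ℕ)
    (hfhom : f.IsHomogeneous d)
    (lt : (Fin n →₀ ℕ) → (Fin n →₀ ℕ) → Prop) (hlt : IsMonomialOrder lt)
    (m : Fin n →₀ ℕ) (hm : IsLeadingMonomial lt f m) (hsqfree : ∀ i, m i ≤ 1) :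
    IsFSplit p (MvPolynomial (Fin n) k ⧸ Ideal.span {f}) :=
  statement11_general p hp k hperfect n f d hfhom lt hlt m hm hsqfree
end

section
/- Let n ≥ 2 and let f ∈ ℂ[X₀,…,X_n] be a nonzero homogeneous polynomial of degree n+1. Suppose there exists a monomial order on ℂ[X₀,…,X_n] such that the leading monomial of f is squarefree (necessarily equal to X₀X₁⋯X_n). Then the projective hypersurface defined by f is singular: there exists a point a ∈ ℂ^{n+1} with a ≠ 0 such that all partial derivatives ∂f/∂X_i vanish at a (and consequently, by Euler's relation, f(a) = 0). -/
open MvPolynomial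

/-- if `f ∈ ℂ[X₀,…,Xₙ]` (`n ≥ 2`) is a nonzero homogeneous polynomial of
degree `n + 1` whose leading monomial with respect to some monomial order is squarefree,
then the projective hypersurface defined by `f` is singular: there is a point
`a ≠ 0` at which all partial derivatives of `f` vanish (and hence `f a = 0`). -/
theorem statement16 (n : ℕ) (hn : 2 ≤ n) (f : MvPolynomial (Fin (n + 1)) ℂ)
    (hf0 : f ≠ 0) (hfhom : f.IsHomogeneous (n + 1))
    (lt : (Fin (n + 1) →₀ ℕ) → (Fin (n + 1) →₀ ℕ) → Prop) (hlt : IsMonomialOrder lt)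
    (m : Fin (n + 1) →₀ ℕ) (hm : IsLeadingMonomial lt f m) (hsqfree : ∀ i, m i ≤ 1) :
    ∃ a : Fin (n + 1) → ℂ, a ≠ 0 ∧
      (∀ i, MvPolynomial.eval a (MvPolynomial.pderiv i f) = 0) ∧
      MvPolynomial.eval a f = 0 := by
  obtain ⟨hsto, hpos, hadd⟩ := hlt
  haveI := hsto
  -- basic facts about the order
  have asymm : ∀ a b, lt a b → lt b a → False := fun a b h1 h2 =>
    absurd (trans_of lt h1 h2) (irrefl_of lt a)
  have cancel : ∀ a b c, lt (a + c) (b + c) → lt a b := by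
    intro a b c h
    rcases trichotomous_of lt a b with h' | rfl | h'
    · exact h'
    · exact absurd h (irrefl_of lt _)
    · exact absurd h (fun h => asymm _ _ h (hadd _ _ _ h'))
  have addlt : ∀ a b c d, lt a b → lt c d → lt (a + c) (b + d) := by
    intro a b c d h1 h2
    have h3 : lt (a + c) (b + c) := hadd _ _ _ h1
    have h4 : lt (c + b) (d + b) := hadd _ _ _ h2
    rw [add_comm c b, add_comm d b] at h4
    exact trans_of lt h3 h4
  have sumlt : ∀ (s : Finset (Fin (n + 1))) (u v : Fin (n + 1) → (Fin (n + 1) →₀ ℕ)),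
      s.Nonempty → (∀ k ∈ s, lt (u k) (v k)) → lt (∑ k ∈ s, u k) (∑ k ∈ s, v k) := by
    intro s
    induction s using Finset.induction_on with
    | empty => intro u v h; exact absurd h (by simp)
    | @insert a s ha ih =>
      intro u v _ h
      rw [Finset.sum_insert ha, Finset.sum_insert ha]
      rcases s.eq_empty_or_nonempty with rfl | hs
      · simpa using h a (by simp)
      · exact addlt _ _ _ _ (h a (by simp)) (ih u v hs fun k hk => h k (by simp [hk]))
  -- degrees
  have hdeg : ∀ e ∈ f.support, ∑ k, e k = n + 1 := by
    intro e he
    have h := hfhom (mem_support_iff.mp he)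
    rw [Finsupp.weight_apply] at h
    simp [Finsupp.sum] at h
    calc ∑ k, e k = ∑ k ∈ e.support, e k :=
          (Finset.sum_subset (Finset.subset_univ _)
            (fun x _ hx => Finsupp.notMem_support_iff.mp hx)).symm
      _ = n + 1 := h
  -- m is the squarefree monomial x_0 ⋯ x_n
  have hsum : ∑ k, m k = n + 1 := hdeg m hm.1
  have hm1 : ∀ k, m k = 1 := by
    intro k
    by_contra hk
    have hlt1 : m k < 1 := lt_of_le_of_ne (hsqfree k) hk
    have h2 : ∑ i, m i < ∑ _i : Fin (n + 1), 1 :=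
      Finset.sum_lt_sum (fun i _ => hsqfree i) ⟨k, Finset.mem_univ k, hlt1⟩
    simp [hsum] at h2
  -- choose the lt-largest variable j
  have hjex : ∀ s : Finset (Fin (n + 1)), s.Nonempty →
      ∃ j ∈ s, ∀ k ∈ s, k ≠ j → lt (Finsupp.single k 1) (Finsupp.single j 1) := by
    intro s
    induction s using Finset.induction_on with
    | empty => intro h; exact absurd h (by simp)
    | @insert a s ha ih =>
      intro _
      rcases s.eq_empty_or_nonempty with rfl | hs
      · refine ⟨a, Finset.mem_insert_self a ∅, ?_⟩
        intro k hk hka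
        rcases Finset.mem_insert.mp hk with rfl | hks
        · exact absurd rfl hka
        · exact absurd hks (Finset.notMem_empty k)
      · obtain ⟨j, hjs, hj⟩ := ih hs
        rcases trichotomous_of lt (Finsupp.single a 1) (Finsupp.single j 1) with h' | he | h'
        · refine ⟨j, Finset.mem_insert_of_mem hjs, ?_⟩
          intro k hk hkj
          rcases Finset.mem_insert.mp hk with rfl | hks
          · exact h'
          · exact hj k hks hkj
        · exfalso
          have haj : a = j := Finsupp.single_left_injective (one_ne_zero (α := ℕ)) he
          exact ha (haj ▸ hjs)
        · refine ⟨a, Finset.mem_insert_self a s, ?_⟩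
          intro k hk hka
          rcases Finset.mem_insert.mp hk with rfl | hks
          · exact absurd rfl hka
          · by_cases hkj : k = j
            · exact hkj ▸ h'
            · exact trans_of lt (hj k hks hkj) h'
  obtain ⟨j, -, hjmax⟩ := hjex Finset.univ ⟨0, Finset.mem_univ 0⟩
  have hjmax' : ∀ k, k ≠ j → lt (Finsupp.single k 1) (Finsupp.single j 1) :=
    fun k hk => hjmax k (Finset.mem_univ k) hk
  -- m as a sum
  have hmeq : m = ∑ k, Finsupp.single k 1 := by
    ext k
    rw [Finsupp.finset_sum_apply]
    simp [Finsupp.single_apply, hm1 k]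
  -- the "bad" monomials x_i x_j^n are not in the support
  have hbad : ∀ i : Fin (n + 1), (Finsupp.single i 1 + Finsupp.single j n) ∉ f.support := by
    intro i hmem
    have hne : (Finsupp.single i 1 + Finsupp.single j n) ≠ m := by
      intro h
      have h2 := DFunLike.congr_fun h j
      rw [Finsupp.add_apply, Finsupp.single_apply, Finsupp.single_apply, if_pos rfl, hm1 j] at h2
      split_ifs at h2 <;> omega
    have hltm := hm.2 _ hmem hne
    rw [hmeq] at hltm
    by_cases hij : i = j
    · subst hij
      have hm2 : (∑ k, Finsupp.single k (1:ℕ)) =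
          (∑ k ∈ Finset.univ.erase i, Finsupp.single k (1:ℕ)) + Finsupp.single i 1 := by
        rw [Finset.sum_erase_add _ _ (Finset.mem_univ i)]
      have hb2 : (Finsupp.single i (1:ℕ) + Finsupp.single i (n:ℕ)) =
          Finsupp.single i (n:ℕ) + Finsupp.single i 1 := add_comm _ _
      rw [hm2, hb2] at hltm
      have h1 : lt (Finsupp.single i n) (∑ k ∈ Finset.univ.erase i, Finsupp.single k 1) :=
        cancel _ _ _ hltm
      have h2 : lt (∑ k ∈ Finset.univ.erase i, Finsupp.single k (1:ℕ)) (Finsupp.single i n) := by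
        have hne2 : (Finset.univ.erase i).Nonempty := by
          rw [← Finset.card_pos, Finset.card_erase_of_mem (Finset.mem_univ i)]
          simp
          omega
        have h3 := sumlt _ (fun k => Finsupp.single k 1) (fun _ => Finsupp.single i 1) hne2
          (fun k hk => hjmax' k (Finset.ne_of_mem_erase hk))
        have h4 : (∑ _k ∈ Finset.univ.erase i, Finsupp.single i (1:ℕ)) = Finsupp.single i n := by
          rw [Finset.sum_const, Finset.card_erase_of_mem (Finset.mem_univ i)]
          simp
        rwa [h4] at h3
      exact asymm _ _ h1 h2
    · -- i ≠ j : cancel ε_i + ε_j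
      have hmemij : i ∈ Finset.univ.erase j := Finset.mem_erase.mpr ⟨hij, Finset.mem_univ i⟩
      have hm2 : (∑ k, Finsupp.single k (1:ℕ)) =
          (∑ k ∈ (Finset.univ.erase j).erase i, Finsupp.single k (1:ℕ))
            + (Finsupp.single i 1 + Finsupp.single j 1) := by
        rw [← Finset.add_sum_erase _ _ (Finset.mem_univ j),
          ← Finset.add_sum_erase _ _ hmemij]
        abel
      have hb2 : (Finsupp.single i (1:ℕ) + Finsupp.single j (n:ℕ)) =
          Finsupp.single j (n - 1 : ℕ) + (Finsupp.single i 1 + Finsupp.single j 1) := by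
        ext k
        simp only [Finsupp.add_apply, Finsupp.single_apply]
        split_ifs <;> omega
      rw [hm2, hb2] at hltm
      have h1 : lt (Finsupp.single j (n - 1))
          (∑ k ∈ (Finset.univ.erase j).erase i, Finsupp.single k 1) := cancel _ _ _ hltm
      have h2 : lt (∑ k ∈ (Finset.univ.erase j).erase i, Finsupp.single k (1:ℕ))
          (Finsupp.single j (n - 1)) := by
        have hcard : ((Finset.univ.erase j).erase i).card = n - 1 := by
          rw [Finset.card_erase_of_mem hmemij, Finset.card_erase_of_mem (Finset.mem_univ j)]
          simp
        have hne2 : ((Finset.univ.erase j).erase i).Nonempty := by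
          rw [← Finset.card_pos, hcard]; omega
        have h3 := sumlt _ (fun k => Finsupp.single k 1) (fun _ => Finsupp.single j 1) hne2
          (fun k hk => hjmax' k (Finset.ne_of_mem_erase (Finset.mem_of_mem_erase hk)))
        have h4 : (∑ _k ∈ (Finset.univ.erase j).erase i, Finsupp.single j (1:ℕ))
            = Finsupp.single j (n - 1) := by
          rw [Finset.sum_const, hcard]
          simp
        rwa [h4] at h3
      exact asymm _ _ h1 h2
  -- the singular point
  set a : Fin (n + 1) → ℂ := fun k => if k = j then 1 else 0 with ha
  have evalmon : ∀ (d : Fin (n + 1) →₀ ℕ) (c : ℂ), (∃ k, k ≠ j ∧ d k ≠ 0) →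
      eval a (monomial d c) = 0 := by
    rintro d c ⟨k, hkj, hdk⟩
    rw [eval_monomial]
    have hk : k ∈ d.support := Finsupp.mem_support_iff.mpr hdk
    have hz : a k ^ d k = 0 := by
      rw [ha]; simp only [if_neg hkj]; exact zero_pow hdk
    rw [Finsupp.prod, Finset.prod_eq_zero hk hz, mul_zero]
  refine ⟨a, ?_, ?_, ?_⟩
  · intro h
    have := congrFun h j
    simp [ha] at this
  · -- partial derivatives vanish
    intro i
    have hrw : (pderiv i) f = ∑ e ∈ f.support,
        (monomial (e - Finsupp.single i 1)) (coeff e f * (e i : ℂ)) := by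
      conv_lhs => rw [f.as_sum]
      rw [map_sum]
      exact Finset.sum_congr rfl fun e _ => pderiv_monomial
    rw [hrw, map_sum]
    apply Finset.sum_eq_zero
    intro e he
    by_cases h0 : e i = 0
    · simp [h0]
    · by_cases hsub : ∃ k, k ≠ j ∧ (e - Finsupp.single i 1 : Fin (n + 1) →₀ ℕ) k ≠ 0
      · exact evalmon _ _ hsub
      · exfalso
        push_neg at hsub
        have hek : ∀ k, k ≠ j → k ≠ i → e k = 0 := by
          intro k hkj hki
          have h5 := hsub k hkj
          rw [Finsupp.tsub_apply, Finsupp.single_apply, if_neg (fun h => hki h.symm)] at h5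
          omega
        by_cases hij : i = j
        · subst hij
          have hei : e i = n + 1 := by
            have hsum2 := hdeg e he
            rw [Finset.sum_eq_single i (fun b _ hb => hek b hb hb)
              (fun hb => absurd (Finset.mem_univ i) hb)] at hsum2
            exact hsum2
          have heq : e = Finsupp.single i 1 + Finsupp.single i n := by
            ext k
            rw [Finsupp.add_apply, Finsupp.single_apply, Finsupp.single_apply]
            by_cases h1 : i = k
            · subst h1
              split_ifs with h2
              · omega
              · exact absurd rfl h2
            · rw [if_neg h1, if_neg h1]
              have := hek k (fun h => h1 h.symm) (fun h => h1 h.symm)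
              omega
          exact hbad i (heq ▸ he)
        · have hei : e i = 1 := by
            have h5 := hsub i hij
            rw [Finsupp.tsub_apply, Finsupp.single_apply, if_pos rfl] at h5
            omega
          have hej : e j = n := by
            have hsum2 := hdeg e he
            have h6 : ∑ k, e k = e i + e j := by
              rw [← Finset.sum_subset (Finset.subset_univ {i, j})]
              · rw [Finset.sum_pair hij]
              · intro k _ hk
                simp only [Finset.mem_insert, Finset.mem_singleton, not_or] at hk
                exact hek k hk.2 hk.1
            omega
          have heq : e = Finsupp.single i 1 + Finsupp.single j n := by
            ext k
            rw [Finsupp.add_apply, Finsupp.single_apply, Finsupp.single_apply]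
            by_cases h1 : i = k
            · subst h1
              rw [if_pos rfl, if_neg (fun h => hij h.symm)]
              omega
            · rw [if_neg h1]
              by_cases h2 : j = k
              · subst h2; rw [if_pos rfl]; omega
              · rw [if_neg h2]
                have := hek k (fun h => h2 h.symm) (fun h => h1 h.symm)
                omega
          exact hbad i (heq ▸ he)
  · -- f vanishes at a
    conv_lhs => rw [f.as_sum]
    rw [map_sum]
    apply Finset.sum_eq_zero
    intro e he
    by_cases hsub : ∃ k, k ≠ j ∧ e k ≠ 0
    · exact evalmon _ _ hsub
    · exfalso
      push_neg at hsub
      have hej : e j = n + 1 := by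
        have hsum2 := hdeg e he
        rw [Finset.sum_eq_single j (fun b _ hb => hsub b hb)
          (fun hb => absurd (Finset.mem_univ j) hb)] at hsum2
        exact hsum2
      have heq : e = Finsupp.single j 1 + Finsupp.single j n := by
        ext k
        rw [Finsupp.add_apply, Finsupp.single_apply, Finsupp.single_apply]
        by_cases h1 : j = k
        · subst h1
          split_ifs with h2
          · omega
          · exact absurd rfl h2
        · rw [if_neg h1, if_neg h1]
          have := hsub k (fun h => h1 h.symm)
          omega
      exact hbad j (heq ▸ he)
end
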